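/- arXiv:2205.02792 — 7 statements merged into one kernel-verified Lean document; each statement's English description precedes it below -/
import Mathlib

section
/- For every tournament G on vertex set {1,...,n}, the concept class C²[G] = {C_j : j ∈ [n]} ∪ {complement of C_j : j ∈ [n]}, where C_j = {i : (i,j) is an edge of G}, admits a no-clash teacher of order 1; i.e., there is a map T assigning to each concept a single instance such that any two distinct concepts in C²[G] disagree on T(C) ∪ T(C'). -/
/-- For every tournament `E` on `Fin n`, the concept class
`C²[G] = {C_j} ∪ {(C_j)ᶜ}` with `C_j = {i : E i j}` admits a no-clash teacher
of order 1 (each teaching set is a single instance). -/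
theorem stmt0 (n : ℕ) (E : Fin n → Fin n → Prop)
    (htour : ∀ i j : Fin n, i ≠ j → (E i j ↔ ¬ E j i))
    (hirr : ∀ i : Fin n, ¬ E i i) :
    ∃ T : Set (Fin n) → Finset (Fin n),
      (∀ C ∈ ({S | ∃ j, S = {i | E i j}} ∪ {S | ∃ j, S = {i | E i j}ᶜ} :
          Set (Set (Fin n))), (T C).card = 1) ∧
      (∀ C ∈ ({S | ∃ j, S = {i | E i j}} ∪ {S | ∃ j, S = {i | E i j}ᶜ} :
          Set (Set (Fin n))),
       ∀ C' ∈ ({S | ∃ j, S = {i | E i j}} ∪ {S | ∃ j, S = {i | E i j}ᶜ} :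
          Set (Set (Fin n))),
        C ≠ C' → ∃ x ∈ T C ∪ T C', (x ∈ C ↔ x ∉ C')) := by
  classical
  set P : Set (Fin n) → Prop :=
    fun C => ∃ j, C = {i | E i j} ∨ C = {i | E i j}ᶜ with hP
  have hmem : ∀ C ∈ ({S | ∃ j, S = {i | E i j}} ∪ {S | ∃ j, S = {i | E i j}ᶜ} :
      Set (Set (Fin n))), P C := by
    rintro C (⟨j, hj⟩ | ⟨j, hj⟩)
    · exact ⟨j, Or.inl hj⟩
    · exact ⟨j, Or.inr hj⟩
  refine ⟨fun C => if h : P C then {h.choose} else ∅, ?_, ?_⟩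
  · intro C hC
    simp only [dif_pos (hmem C hC)]
    exact Finset.card_singleton _
  · intro C hC C' hC' hne
    have pC := hmem C hC
    have pC' := hmem C' hC'
    simp only [dif_pos pC, dif_pos pC']
    set j := pC.choose with hjdef
    set k := pC'.choose with hkdef
    have hj := pC.choose_spec
    have hk := pC'.choose_spec
    rw [← hjdef] at hj
    rw [← hkdef] at hk
    clear_value j k
    -- membership simp facts
    have hjj : j ∉ ({i | E i j} : Set (Fin n)) := hirr j
    have hkk : k ∉ ({i | E i k} : Set (Fin n)) := hirr k
    rcases hj with hj | hj <;> rcases hk with hk | hk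
    · -- C = C_j, C' = C_k
      have hjk : j ≠ k := by rintro rfl; exact hne (hj.trans hk.symm)
      by_cases hE : E j k
      · refine ⟨j, by simp, ?_⟩
        rw [hj, hk]
        simp only [Set.mem_setOf_eq]
        simp [hirr j, hE]
      · have hE' : E k j := by
          by_contra h; exact hE (((htour j k hjk)).mpr h)
        refine ⟨k, by simp, ?_⟩
        rw [hj, hk]
        simp only [Set.mem_setOf_eq]
        simp [hirr k, hE']
    · -- C = C_j, C' = C_kᶜ : need agreement point of C_j and C_k
      by_cases hjk : j = k
      · subst hjk
        refine ⟨j, by simp, ?_⟩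
        rw [hj, hk]
        simp [hirr j]
      · by_cases hE : E j k
        · have hE' : ¬ E k j := (htour j k hjk).mp hE
          refine ⟨k, by simp, ?_⟩
          rw [hj, hk]
          simp [hirr k, hE']
        · refine ⟨j, by simp, ?_⟩
          rw [hj, hk]
          simp [hirr j, hE]
    · -- C = C_jᶜ, C' = C_k
      by_cases hjk : j = k
      · subst hjk
        refine ⟨j, by simp, ?_⟩
        rw [hj, hk]
        simp [hirr j]
      · by_cases hE : E j k
        · have hE' : ¬ E k j := (htour j k hjk).mp hE
          refine ⟨k, by simp, ?_⟩
          rw [hj, hk]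
          simp [hirr k, hE']
        · refine ⟨j, by simp, ?_⟩
          rw [hj, hk]
          simp [hirr j, hE]
    · -- C = C_jᶜ, C' = C_kᶜ : disagreement point of C_j and C_k
      have hjk : j ≠ k := by rintro rfl; exact hne (hj.trans hk.symm)
      by_cases hE : E j k
      · refine ⟨j, by simp, ?_⟩
        rw [hj, hk]
        simp [hirr j, hE]
      · have hE' : E k j := by
          by_contra h; exact hE (((htour j k hjk)).mpr h)
        refine ⟨k, by simp, ?_⟩
        rw [hj, hk]
        simp [hirr k, hE']
end

section
/- If 𝒞 is a concept class over [n] with |𝒞| = 2n that admits a no-clash teacher of order 1, then there exists a tournament G on [n] such that 𝒞 = C²[G]. -/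
/-- If `𝒞` is a concept class over `Fin n` with `|𝒞| = 2n`
admitting a no-clash teacher of order 1, then `𝒞 = C²[G]` for some
tournament `G` on `Fin n`. -/
theorem stmt3 (n : ℕ) (𝒞 : Finset (Finset (Fin n)))
    (hcard : 𝒞.card = 2 * n)
    (T : Finset (Fin n) → Finset (Fin n))
    (horder : ∀ C ∈ 𝒞, (T C).card = 1)
    (hnc : ∀ C ∈ 𝒞, ∀ C' ∈ 𝒞, C ≠ C' →
      ∃ x ∈ T C ∪ T C', (x ∈ C ↔ x ∉ C')) :
    ∃ E : Fin n → Fin n → Bool,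
      (∀ i j : Fin n, i ≠ j → (E i j = !E j i)) ∧
      (∀ i : Fin n, E i i = false) ∧
      𝒞 = (Finset.univ.image fun j : Fin n => Finset.univ.filter fun a => E a j) ∪
          (Finset.univ.image fun j : Fin n => (Finset.univ.filter fun a => E a j)ᶜ) := by
  classical
  rcases Nat.eq_zero_or_pos n with hn | hn
  · subst hn
    refine ⟨fun _ _ => false, fun i => i.elim0, fun i => i.elim0, ?_⟩
    have h0 : 𝒞 = ∅ := Finset.card_eq_zero.mp (by simpa using hcard)
    simp [h0]
  have hx : ∀ C ∈ 𝒞, ∃ a, T C = {a} := fun C hC => Finset.card_eq_one.mp (horder C hC)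
  obtain ⟨F, hF1, hF2⟩ : ∃ F : Finset (Fin n) → Fin n × Bool,
      (∀ C ∈ 𝒞, T C = {(F C).1}) ∧ (∀ C ∈ 𝒞, ((F C).2 = true ↔ (F C).1 ∈ C)) := by
    refine ⟨fun C => if h : ∃ a, T C = {a} then (h.choose, decide (h.choose ∈ C))
        else (⟨0, hn⟩, false), ?_, ?_⟩
    · intro C hC
      simp only [dif_pos (hx C hC)]
      exact (hx C hC).choose_spec
    · intro C hC
      simp only [dif_pos (hx C hC)]
      exact decide_eq_true_iff
  have hinj : ∀ C ∈ 𝒞, ∀ C' ∈ 𝒞, F C = F C' → C = C' := by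
    intro C hC C' hC' hFe
    by_contra hne
    obtain ⟨x, hxm, hxi⟩ := hnc C hC C' hC' hne
    rw [hF1 C hC, hF1 C' hC', hFe, Finset.union_self, Finset.mem_singleton] at hxm
    subst hxm
    have h1 := hF2 C hC
    have h2 := hF2 C' hC'
    rw [hFe] at h1
    rw [← h1, ← h2] at hxi
    tauto
  have hsurj : ∀ p : Fin n × Bool, ∃ C ∈ 𝒞, F C = p := by
    have himg : 𝒞.image F = Finset.univ := by
      apply Finset.eq_univ_of_card
      rw [Finset.card_image_of_injOn (fun C hC C' hC' h => hinj C hC C' hC' h), hcard]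
      simp [mul_comm]
    intro p
    have hp : p ∈ 𝒞.image F := himg ▸ Finset.mem_univ p
    simpa [Finset.mem_image] using hp
  choose D hD hDF using hsurj
  have hmem : ∀ (j : Fin n) (b : Bool), (j ∈ D (j, b) ↔ b = true) := by
    intro j b
    have h := hF2 (D (j, b)) (hD (j, b))
    rw [hDF (j, b)] at h
    exact h.symm
  have hT : ∀ (j : Fin n) (b : Bool), T (D (j, b)) = {j} := by
    intro j b
    have h := hF1 (D (j, b)) (hD (j, b))
    rwa [hDF (j, b)] at h
  have hnotmem : ∀ j : Fin n, j ∉ D (j, false) := fun j h => by simpa using (hmem j false).mp h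
  have hmemt : ∀ j : Fin n, j ∈ D (j, true) := fun j => (hmem j true).mpr rfl
  have pair : ∀ (j i : Fin n) (b b' : Bool), (j, b) ≠ ((i, b') : Fin n × Bool) →
      ∃ x : Fin n, (x = j ∨ x = i) ∧ (x ∈ D (j, b) ↔ x ∉ D (i, b')) := by
    intro j i b b' hpq
    have hne : D (j, b) ≠ D (i, b') := by
      intro h
      apply hpq
      rw [← hDF (j, b), ← hDF (i, b'), h]
    obtain ⟨x, hxm, hxi⟩ := hnc _ (hD (j, b)) _ (hD (i, b')) hne
    refine ⟨x, ?_, hxi⟩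
    rw [hT j b, hT i b'] at hxm
    simpa [Finset.mem_union] using hxm
  have fact1 : ∀ i j : Fin n, i ≠ j → (j ∉ D (i, true) ∨ i ∉ D (j, true)) := by
    intro i j hij
    obtain ⟨x, hx1, hx2⟩ := pair j i true true (by simp [hij.symm])
    rcases hx1 with rfl | rfl
    · left; exact hx2.mp (hmemt x)
    · right; intro h; exact hx2.mp h (hmemt x)
  have fact2 : ∀ i j : Fin n, i ≠ j → (j ∈ D (i, false) ∨ i ∈ D (j, false)) := by
    intro i j hij
    obtain ⟨x, hx1, hx2⟩ := pair j i false false (by simp [hij.symm])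
    rcases hx1 with rfl | rfl
    · left; by_contra h; exact hnotmem x (hx2.mpr h)
    · right; exact hx2.mpr (hnotmem x)
  have fact3 : ∀ i j : Fin n, i ≠ j → j ∈ D (i, false) → i ∈ D (j, true) := by
    intro i j hij hji
    obtain ⟨x, hx1, hx2⟩ := pair j i true false (by simp [hij.symm])
    rcases hx1 with rfl | rfl
    · exact absurd hji (hx2.mp (hmemt x))
    · exact hx2.mpr (hnotmem x)
  have tourn : ∀ i j : Fin n, i ≠ j → (i ∈ D (j, false) ↔ j ∉ D (i, false)) := by
    intro i j hij
    constructor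
    · intro h1 h2
      have a1 := fact3 i j hij h2
      have a2 := fact3 j i hij.symm h1
      rcases fact1 i j hij with h | h
      · exact h a2
      · exact h a1
    · intro h2
      rcases fact2 i j hij with h | h
      · exact absurd h h2
      · exact h
  have compl : ∀ j : Fin n, D (j, true) = (D (j, false))ᶜ := by
    intro j
    ext a
    rw [Finset.mem_compl]
    by_cases haj : a = j
    · subst haj
      simp [hmemt a, hnotmem a]
    · constructor
      · intro h1 h0
        have a2 := fact3 j a (Ne.symm haj) h0
        rcases fact1 a j haj with h | h
        · exact h a2
        · exact h h1
      · intro h0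
        have hj : j ∈ D (a, false) := by
          rcases fact2 a j haj with h | h
          · exact h
          · exact absurd h h0
        exact fact3 a j haj hj
  refine ⟨fun i j => decide (i ∈ D (j, false)), ?_, ?_, ?_⟩
  · intro i j hij
    have h := tourn i j hij
    by_cases hj : j ∈ D (i, false)
    · have hi : i ∉ D (j, false) := fun hi => h.mp hi hj
      simp [hi, hj]
    · have hi : i ∈ D (j, false) := h.mpr hj
      simp [hi, hj]
  · intro i
    simp [hnotmem i]
  · have hfilter : ∀ j : Fin n,
        (Finset.univ.filter fun a : Fin n => decide (a ∈ D (j, false)) = true) = D (j, false) := by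
      intro j; ext a; simp
    ext C
    constructor
    · intro hC
      obtain ⟨⟨j, b⟩, hjb⟩ : ∃ p : Fin n × Bool, F C = p := ⟨F C, rfl⟩
      have hCD : C = D (j, b) := hinj C hC _ (hD _) (hjb.trans (hDF _).symm)
      rw [Finset.mem_union, Finset.mem_image, Finset.mem_image]
      cases b
      · left
        exact ⟨j, Finset.mem_univ j, by rw [hfilter j, ← hCD]⟩
      · right
        refine ⟨j, Finset.mem_univ j, ?_⟩
        rw [hfilter j, ← compl j, ← hCD]
    · intro hC
      rw [Finset.mem_union, Finset.mem_image, Finset.mem_image] at hC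
      rcases hC with ⟨j, _, rfl⟩ | ⟨j, _, rfl⟩
      · rw [hfilter j]; exact hD (j, false)
      · rw [hfilter j, ← compl j]; exact hD (j, true)
end

section
/- For every no-clash teacher T of order d for a concept class 𝒞 and every d-subset S of the domain, at most 2^d concepts C ∈ 𝒞 satisfy T(C) = S. -/
/-- For a no-clash teacher of order `d` (all teaching sets of
size `d`) and any `d`-subset `S` of the domain, at most `2^d` concepts have
teaching set `S`. -/
theorem stmt7 {X : Type*} [DecidableEq X] (d : ℕ)
    (𝒞 : Finset (Finset X)) (T : Finset X → Finset X)
    (horder : ∀ C ∈ 𝒞, (T C).card = d)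
    (hnc : ∀ C ∈ 𝒞, ∀ C' ∈ 𝒞, C ≠ C' →
      ∃ x ∈ T C ∪ T C', (x ∈ C ↔ x ∉ C'))
    (S : Finset X) (hS : S.card = d) :
    (𝒞.filter fun C => T C = S).card ≤ 2 ^ d := by
  have hinj : Set.InjOn (fun C => C ∩ S)
      ↑(𝒞.filter fun C => T C = S) := by
    intro C hC C' hC' heq
    simp only [Finset.coe_filter, Set.mem_setOf_eq] at hC hC'
    by_contra hne
    obtain ⟨x, hx, hiff⟩ := hnc C hC.1 C' hC'.1 hne
    rw [hC.2, hC'.2, Finset.union_self] at hx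
    have h1 : (x ∈ C ∩ S) ↔ (x ∈ C' ∩ S) := by simp only at heq; rw [heq]
    simp [Finset.mem_inter, hx] at h1
    tauto
  calc (𝒞.filter fun C => T C = S).card
      ≤ (S.powerset).card := by
        apply Finset.card_le_card_of_injOn (fun C => C ∩ S) _ hinj
        intro C _
        simp [Finset.mem_powerset]
    _ = 2 ^ d := by rw [Finset.card_powerset, hS]
end

section
/- For all sufficiently large n there exists a concept class 𝒞 of size n over domain [n] with NCTD(𝒞) = 1 and TD_min(𝒞) ≥ ⌊log₂(n) − 2·log₂(log₂(2n))⌋ − 4. -/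
/-!
Take the concepts `C_x = {a | x beats a}` of a tournament on `[n]` in which every player also
beats itself. Of two players one beats the other, so `T (C_x) = {x}` is a no-clash teacher.
In a uniformly random tournament, for a fixed player `x` and a fixed `d`-set `D`, each of the
`n - d - 1` other players outside `D` plays against `D` exactly like `x` with probability `2⁻ᵈ`,
independently, so all of them differ from `x` on `D` with probability
`(1 - 2⁻ᵈ)^(n-d-1) ≤ exp (-(n - d - 1) / 2ᵈ)`. Once `2^(d+5) log₂² (2n) ≤ n`, which holds for
`d = ⌊log₂ n − 2 log₂ log₂ (2n)⌋ − 5`, this is below `1 / (n * choose n d)`, and a union bound over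
the pairs `(x, D)` yields a tournament in which no concept has a teaching set of size `d`.
Probabilities are counted as numbers of `n × n` bit matrices.
-/

open Finset

section ConceptClass

variable {α : Type*}

def IsTeachingSet (𝒞 : Finset (Finset α)) (C D : Finset α) : Prop :=
  ∀ C' ∈ 𝒞, C' ≠ C → ∃ x ∈ D, (x ∈ C ↔ x ∉ C')

structure IsReflTournament (r : α → α → Bool) : Prop where
  self : ∀ x, r x x = true
  ne : ∀ {x y}, x ≠ y → r x y = !r y x

variable [DecidableEq α]

def IsNoClashTeacher (𝒞 : Finset (Finset α)) (T : Finset α → Finset α) : Prop :=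
  ∀ C ∈ 𝒞, ∀ C' ∈ 𝒞, C ≠ C' → ∃ x ∈ T C ∪ T C', (x ∈ C ↔ x ∉ C')

theorem not_isNoClashTeacher_of_forall_eq_empty {𝒞 : Finset (Finset α)} (h𝒞 : 1 < #𝒞)
    {T : Finset α → Finset α} (hT : ∀ C ∈ 𝒞, T C = ∅) : ¬ IsNoClashTeacher 𝒞 T := by
  intro hclash
  obtain ⟨C, hC, C', hC', hne⟩ := one_lt_card.1 h𝒞
  obtain ⟨x, hx, -⟩ := hclash C hC C' hC' hne
  simp [hT C hC, hT C' hC'] at hx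

variable [Fintype α]

def rowSet (r : α → α → Bool) (x : α) : Finset α := {a | r x a}

variable {r : α → α → Bool}

theorem IsReflTournament.rowSet_injective (hr : IsReflTournament r) :
    Function.Injective (rowSet r) := by
  intro x y hxy
  by_contra hne
  have hx : x ∈ rowSet r y := hxy ▸ by simp [rowSet, hr.self]
  have hy : y ∈ rowSet r x := hxy ▸ by simp [rowSet, hr.self]
  simp only [rowSet, mem_filter, mem_univ, true_and] at hx hy
  simp [hr.ne hne, hx] at hy

theorem IsReflTournament.isNoClashTeacher (hr : IsReflTournament r) :
    IsNoClashTeacher (univ.image (rowSet r)) fun C => {x | rowSet r x = C} := by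
  rintro _ hC _ hC' hne
  obtain ⟨x, -, rfl⟩ := mem_image.1 hC
  obtain ⟨y, -, rfl⟩ := mem_image.1 hC'
  have hxy : x ≠ y := fun h => hne (h ▸ rfl)
  cases hyx : r y x
  · exact ⟨x, by simp, by simp [rowSet, hr.self x, hyx]⟩
  · exact ⟨y, by simp, by simp [rowSet, hr.self y, hr.ne hxy, hyx]⟩

theorem IsReflTournament.card_filter_rowSet_eq_le_one (hr : IsReflTournament r) (C : Finset α) :
    #{x | rowSet r x = C} ≤ 1 :=
  card_le_one.2 fun _ hx _ hy =>
    hr.rowSet_injective ((mem_filter.1 hx).2.trans (mem_filter.1 hy).2.symm)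

theorem IsReflTournament.lt_card_of_isTeachingSet (hr : IsReflTournament r) {d : ℕ}
    (hd : d ≤ Fintype.card α) {x : α}
    (hagree : ∀ D : Finset α, #D = d → ∃ y ≠ x, ∀ a ∈ D, r y a = r x a) {D : Finset α}
    (hD : IsTeachingSet (univ.image (rowSet r)) (rowSet r x) D) : d < #D := by
  by_contra! hDd
  obtain ⟨D', hDD', hD'⟩ := exists_superset_card_eq hDd hd
  obtain ⟨y, hyx, hy⟩ := hagree D' hD'
  obtain ⟨a, ha, hdiff⟩ := hD _ (mem_image_of_mem _ (mem_univ y)) (hr.rowSet_injective.ne hyx)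
  simp [rowSet, hy a (hDD' ha)] at hdiff

end ConceptClass

section RowCounting

variable {ι β : Type*} [Fintype ι] [DecidableEq ι] [Fintype β] [DecidableEq β]

theorem card_filter_forall_mem_le (S : Finset ι) (A : ι → (ι → β) → Finset β) (m : ℕ)
    (hA : ∀ i ∈ S, ∀ f, #(A i f) ≤ m)
    (hdep : ∀ i ∈ S, ∀ f f', (∀ j ∉ S, f j = f' j) → A i f = A i f') :
    #{f : ι → β | ∀ i ∈ S, f i ∈ A i f} ≤ m ^ #S * Fintype.card β ^ (Fintype.card ι - #S) := by
  set s : Finset (ι → β) := {f | ∀ i ∈ S, f i ∈ A i f}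
  let outside : (ι → β) → ({j // j ∉ S} → β) := fun f j => f j
  have hfiber : ∀ r ∈ s.image outside, #{f ∈ s | outside f = r} ≤ m ^ #S := by
    intro r hr
    obtain ⟨f₀, -, rfl⟩ := mem_image.1 hr
    calc #{f ∈ s | outside f = outside f₀}
        ≤ #(Fintype.piFinset fun i : S => A i f₀) := by
          refine card_le_card_of_injOn (fun f i => f i) (fun f hf => ?_) (fun f hf f' hf' h => ?_)
          · simp only [coe_filter, Set.mem_ofPred_eq, s, mem_filter, mem_univ, true_and] at hf
            refine Fintype.mem_piFinset.2 fun i => ?_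
            rw [hdep i i.2 f₀ f fun j hj => (congrFun hf.2 ⟨j, hj⟩).symm]
            exact hf.1 i i.2
          · simp only [coe_filter, Set.mem_ofPred_eq, s, mem_filter, mem_univ, true_and] at hf hf'
            funext j
            by_cases hj : j ∈ S
            · exact congrFun h ⟨j, hj⟩
            · exact congrFun (hf.2.trans hf'.2.symm) ⟨j, hj⟩
      _ = ∏ i : S, #(A i f₀) := Fintype.card_piFinset _
      _ ≤ m ^ #S := by
          simpa using prod_le_pow_card univ (fun i : S => #(A i f₀)) m fun i _ => hA i i.2 f₀
  calc #s ≤ m ^ #S * #(s.image outside) := card_le_mul_card_image s _ hfiber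
    _ ≤ m ^ #S * Fintype.card ({j // j ∉ S} → β) := by gcongr; exact card_le_univ _
    _ = m ^ #S * Fintype.card β ^ (Fintype.card ι - #S) := by
        rw [Fintype.card_fun, Fintype.card_subtype_compl, Fintype.card_coe]

end RowCounting

theorem card_filter_forall_mem_eq_two_pow {α : Type*} [Fintype α] [DecidableEq α]
    (D : Finset α) (c : α → Bool) :
    #{r : α → Bool | ∀ a ∈ D, r a = c a} = 2 ^ (Fintype.card α - #D) := by
  have : ({r : α → Bool | ∀ a ∈ D, r a = c a} : Finset _) =
      Fintype.piFinset fun a => if a ∈ D then {c a} else univ := by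
    ext r
    simp only [mem_filter, mem_univ, true_and, Fintype.mem_piFinset]
    refine forall_congr' fun a => ?_
    split_ifs with ha <;> simp [ha]
  rw [this, Fintype.card_piFinset]
  simp [apply_ite, prod_ite, filter_notMem_eq_sdiff, card_univ_sdiff]

section XorTournament

variable {α : Type*} [LinearOrder α]

/-- `o x y` and `o y x` enter symmetrically, so the `≤`-term makes this a reflexive tournament.
For uniform `o` it is uniform, and once the row `o a` is fixed, the bit `o y a` alone decides
whether `y` beats `a`. -/
def xorTournament (o : α → α → Bool) (x y : α) : Bool :=
  (o x y ^^ o y x) ^^ decide (x ≤ y)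

theorem xorTournament_self (o : α → α → Bool) (x : α) : xorTournament o x x = true := by
  simp [xorTournament]

theorem xorTournament_of_ne (o : α → α → Bool) {x y : α} (h : x ≠ y) :
    xorTournament o x y = !xorTournament o y x := by
  rcases h.lt_or_gt with h | h <;>
    simp [xorTournament, h.le, h.not_ge, Bool.xor_comm (o x y)]

theorem isReflTournament_xorTournament (o : α → α → Bool) : IsReflTournament (xorTournament o) :=
  ⟨xorTournament_self o, xorTournament_of_ne o⟩

theorem xorTournament_eq_iff (o : α → α → Bool) (y a : α) (b : Bool) :
    xorTournament o y a = b ↔ o y a = ((b ^^ o a y) ^^ decide (y ≤ a)) := by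
  unfold xorTournament
  cases o y a <;> cases o a y <;> cases b <;> cases decide (y ≤ a) <;> simp

variable [Fintype α]

theorem card_filter_xorTournament_no_agreeing_row_le (x : α) (D : Finset α)
    (hD : #D + 1 ≤ Fintype.card α) :
    #{o : α → α → Bool | ∀ y ≠ x, ∃ a ∈ D, xorTournament o y a ≠ xorTournament o x a} ≤
      (2 ^ Fintype.card α - 2 ^ (Fintype.card α - #D)) ^ (Fintype.card α - #D - 1) *
        (2 ^ Fintype.card α) ^ (#D + 1) := by
  set n := Fintype.card α
  obtain ⟨S, hS, hScard⟩ : ∃ S ⊆ (insert x D)ᶜ, #S = n - #D - 1 := by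
    refine exists_subset_card_eq ?_
    rw [card_compl]
    have := card_insert_le x D
    omega
  have hout : ∀ j ∈ insert x D, j ∉ S := fun j hj hjS => mem_compl.1 (hS hjS) hj
  -- `y ∈ S` plays against `D` like `x` iff the row `o y` equals `target y o` on `D`, and
  -- `target y o` only reads rows outside `S`.
  let target (y : α) (o : α → α → Bool) (a : α) : Bool :=
    (xorTournament o x a ^^ o a y) ^^ decide (y ≤ a)
  let A (y : α) (o : α → α → Bool) : Finset (α → Bool) :=
    {r | ¬ ∀ a ∈ D, r a = target y o a}
  have hsub : ({o | ∀ y ≠ x, ∃ a ∈ D, xorTournament o y a ≠ xorTournament o x a} :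
      Finset (α → α → Bool)) ⊆ ({o | ∀ y ∈ S, o y ∈ A y o} : Finset _) := by
    intro o ho
    simp only [mem_filter, mem_univ, true_and, A] at ho ⊢
    intro y hy hrow
    have hyx : y ≠ x := fun h => hout x (mem_insert_self x D) (h ▸ hy)
    obtain ⟨a, ha, hne⟩ := ho y hyx
    exact hne ((xorTournament_eq_iff o y a _).2 (hrow a ha))
  have hA : ∀ y ∈ S, ∀ o, #(A y o) ≤ 2 ^ n - 2 ^ (n - #D) := by
    intro y _ o
    simp only [A]
    rw [filter_not, card_sdiff_of_subset (filter_subset _ _), card_univ, Fintype.card_fun,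
      Fintype.card_bool, card_filter_forall_mem_eq_two_pow]
  have hdep : ∀ y ∈ S, ∀ o o', (∀ j ∉ S, o j = o' j) → A y o = A y o' := by
    intro y _ o o' h
    refine filter_congr fun r _ => not_congr <| forall₂_congr fun a ha => ?_
    simp only [target, xorTournament, h x (hout x (mem_insert_self x D)),
      h a (hout a (mem_insert_of_mem ha))]
  calc _ ≤ #({o | ∀ y ∈ S, o y ∈ A y o} : Finset (α → α → Bool)) := card_le_card hsub
    _ ≤ _ := card_filter_forall_mem_le S A _ hA hdep
    _ = _ := by
      rw [hScard, Fintype.card_fun, Fintype.card_bool]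
      congr 2
      omega

theorem exists_xorTournament_forall_exists_agreeing_row (d : ℕ) (hd : d + 1 ≤ Fintype.card α)
    (hcount : Fintype.card α * (Fintype.card α).choose d *
        (2 ^ Fintype.card α - 2 ^ (Fintype.card α - d)) ^ (Fintype.card α - d - 1) <
      (2 ^ Fintype.card α) ^ (Fintype.card α - d - 1)) :
    ∃ o : α → α → Bool, ∀ x (D : Finset α), #D = d →
      ∃ y ≠ x, ∀ a ∈ D, xorTournament o y a = xorTournament o x a := by
  set n := Fintype.card α
  by_contra! hbad
  let bad (p : α × Finset α) : Finset (α → α → Bool) :=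
    {o | ∀ y ≠ p.1, ∃ a ∈ p.2, xorTournament o y a ≠ xorTournament o p.1 a}
  have hcover : (univ : Finset (α → α → Bool)) ⊆ (univ ×ˢ powersetCard d univ).biUnion bad := by
    intro o _
    obtain ⟨x, D, hD, hxD⟩ := hbad o
    exact mem_biUnion.2 ⟨(x, D), by simp [hD], by simpa [bad] using hxD⟩
  have hbound : ∀ p ∈ univ ×ˢ powersetCard d univ, #(bad p) ≤
      (2 ^ n - 2 ^ (n - d)) ^ (n - d - 1) * (2 ^ n) ^ (d + 1) := by
    rintro ⟨x, D⟩ hp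
    obtain rfl : #D = d := (mem_powersetCard.1 (mem_product.1 hp).2).2
    exact card_filter_xorTournament_no_agreeing_row_le x D hd
  have := (card_le_card hcover).trans (card_biUnion_le_card_mul _ _ _ hbound)
  rw [card_univ, Fintype.card_fun, Fintype.card_fun, Fintype.card_bool, card_product,
    card_univ, card_powersetCard, card_univ] at this
  have hsplit : (2 ^ n) ^ n = (2 ^ n) ^ (n - d - 1) * (2 ^ n) ^ (d + 1) := by
    rw [← pow_add]; congr 1; omega
  refine hcount.not_ge (Nat.le_of_mul_le_mul_right ?_ (by positivity : 0 < (2 ^ n) ^ (d + 1)))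
  calc (2 ^ n) ^ (n - d - 1) * (2 ^ n) ^ (d + 1) = (2 ^ n) ^ n := hsplit.symm
    _ ≤ _ := this
    _ = _ := by ring

end XorTournament

open Real

theorem two_zpow_floor_mul_sq_le {x L : ℝ} (hx : 0 < x) (hL : 0 < L) :
    (2 : ℝ) ^ ⌊logb 2 x - 2 * logb 2 L⌋ * L ^ 2 ≤ x := by
  have hfloor : (2 : ℝ) ^ ⌊logb 2 x - 2 * logb 2 L⌋ ≤ 2 ^ (logb 2 x - 2 * logb 2 L) := by
    rw [← rpow_intCast]
    exact rpow_le_rpow_of_exponent_le one_le_two (Int.floor_le _)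
  have hexact : (2 : ℝ) ^ (logb 2 x - 2 * logb 2 L) * L ^ 2 = x := by
    rw [rpow_sub two_pos, mul_comm 2 (logb 2 L), rpow_mul zero_le_two,
      rpow_logb two_pos (by norm_num) hx, rpow_logb two_pos (by norm_num) hL, rpow_two]
    field_simp
  calc _ ≤ (2 : ℝ) ^ (logb 2 x - 2 * logb 2 L) * L ^ 2 := by gcongr
    _ = x := hexact

theorem mul_log_le_logb_sq {n d : ℕ} (h : (2 : ℝ) ^ (d + 1) ≤ n) :
    (d + 1) * log n ≤ logb 2 n ^ 2 := by
  have hdt : (d + 1 : ℝ) ≤ logb 2 n := by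
    rw [le_logb_iff_rpow_le one_lt_two (lt_of_lt_of_le (by positivity) h)]
    exact_mod_cast h
  have ht0 : 0 ≤ logb 2 n := le_trans (by positivity) hdt
  have hlog : log n = logb 2 n * log 2 := (div_mul_cancel₀ _ (log_pos one_lt_two).ne').symm
  rw [hlog]
  calc (d + 1) * (logb 2 n * log 2) ≤ logb 2 n * (logb 2 n * log 2) := by gcongr
    _ ≤ logb 2 n * logb 2 n := by
        gcongr; exact mul_le_of_le_one_right ht0 (by linarith [log_two_lt_d9])
    _ = logb 2 n ^ 2 := (sq _).symm

theorem log_mul_lt_div_two_pow {n d : ℕ} (hn : 1 ≤ n)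
    (h : 2 ^ (d + 5) * logb 2 (2 * n) ^ 2 ≤ n) :
    d + 1 ≤ n ∧ (d + 1) * log n < ((n - d - 1 : ℕ) : ℝ) / 2 ^ d := by
  have hnR : (1 : ℝ) ≤ n := by exact_mod_cast hn
  set t := logb 2 n
  have ht0 : 0 ≤ t := logb_nonneg one_lt_two hnR
  have hL : logb 2 (2 * n) = 1 + t := by
    rw [logb_mul two_ne_zero (by positivity), logb_self_eq_one one_lt_two]
  rw [hL, show (2 : ℝ) ^ (d + 5) = 32 * 2 ^ d by ring] at h
  have h32 : 32 * 2 ^ d ≤ (n : ℝ) :=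
    calc 32 * 2 ^ d = 32 * 2 ^ d * 1 := (mul_one _).symm
      _ ≤ 32 * 2 ^ d * (1 + t) ^ 2 := by gcongr; nlinarith
      _ ≤ n := h
  have hdn : 32 * (d + 1) ≤ n := by
    have : d + 1 ≤ 2 ^ d := Nat.lt_two_pow_self
    have : 32 * 2 ^ d ≤ n := by exact_mod_cast h32
    omega
  refine ⟨by omega, ?_⟩
  have hm : (31 / 32 : ℝ) * n ≤ ((n - d - 1 : ℕ) : ℝ) := by
    rw [Nat.sub_sub, Nat.cast_sub (by omega)]
    have : (32 : ℝ) * (d + 1) ≤ n := by exact_mod_cast hdn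
    push_cast
    linarith
  have hlhs : (d + 1) * log n ≤ t ^ 2 := mul_log_le_logb_sq <|
    calc (2 : ℝ) ^ (d + 1) = 2 * 2 ^ d := pow_succ' _ _
      _ ≤ 32 * 2 ^ d := by gcongr; norm_num
      _ ≤ n := h32
  rw [lt_div_iff₀ (by positivity)]
  calc (d + 1) * log n * 2 ^ d ≤ t ^ 2 * 2 ^ d := by gcongr
    _ < (1 + t) ^ 2 * 2 ^ d := by gcongr; linarith
    _ ≤ n / 32 := by linarith
    _ < 31 / 32 * n := by linarith
    _ ≤ _ := hm

theorem mul_choose_mul_pow_lt {n d : ℕ} (hd : d + 1 ≤ n)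
    (h : (d + 1) * log n < ((n - d - 1 : ℕ) : ℝ) / 2 ^ d) :
    n * n.choose d * (2 ^ n - 2 ^ (n - d)) ^ (n - d - 1) < (2 ^ n) ^ (n - d - 1) := by
  set m := n - d - 1
  have hn : (0 : ℝ) < n := by exact_mod_cast (show 0 < n by omega)
  set q : ℝ := 1 - (2 ^ d)⁻¹
  have hq : 0 ≤ q := by
    have : ((2 : ℝ) ^ d)⁻¹ ≤ 1 := inv_le_one_of_one_le₀ (one_le_pow₀ one_le_two)
    linarith
  have hsub : (((2 ^ n - 2 ^ (n - d) : ℕ)) : ℝ) = 2 ^ n * q := by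
    rw [Nat.cast_sub (Nat.pow_le_pow_right two_pos (Nat.sub_le n d))]
    push_cast
    rw [pow_sub₀ _ two_ne_zero (by omega : d ≤ n), mul_sub, mul_one]
  have hchoose : (n : ℝ) * n.choose d ≤ exp ((d + 1) * log n) := by
    have : ((d + 1 : ℕ) : ℝ) * log n = (d + 1) * log n := by norm_cast
    rw [← this, exp_nat_mul, exp_log hn, pow_succ']
    gcongr
    exact_mod_cast Nat.choose_le_pow n d
  have hpow : q ^ m ≤ exp (-(m / 2 ^ d)) := by
    calc q ^ m ≤ exp (-(2 ^ d)⁻¹) ^ m := pow_le_pow_left₀ hq (one_sub_le_exp_neg _) m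
      _ = exp (-(m / 2 ^ d)) := by rw [← exp_nat_mul]; ring_nf
  have key : (n : ℝ) * n.choose d * (((2 ^ n - 2 ^ (n - d) : ℕ)) : ℝ) ^ m < (2 ^ n) ^ m := by
    calc (n : ℝ) * n.choose d * (((2 ^ n - 2 ^ (n - d) : ℕ)) : ℝ) ^ m
        = n * n.choose d * q ^ m * (2 ^ n) ^ m := by rw [hsub, mul_pow]; ring
      _ ≤ exp ((d + 1) * log n) * exp (-(m / 2 ^ d)) * (2 ^ n) ^ m := by gcongr
      _ = exp ((d + 1) * log n - m / 2 ^ d) * (2 ^ n) ^ m := by rw [← exp_add]; ring_nf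
      _ < 1 * (2 ^ n) ^ m := by
          gcongr
          exact exp_lt_one_iff.2 (by linarith)
      _ = (2 ^ n) ^ m := one_mul _
  exact_mod_cast key

theorem exists_xorTournament_le_card_of_isTeachingSet {α : Type*} [LinearOrder α] [Fintype α]
    (hα : 1 ≤ Fintype.card α) :
    ∃ o : α → α → Bool, ∀ x D, IsTeachingSet (univ.image (rowSet (xorTournament o)))
      (rowSet (xorTournament o) x) D →
      ⌊logb 2 (Fintype.card α) - 2 * logb 2 (logb 2 (2 * Fintype.card α))⌋ - 4 ≤ (#D : ℤ) := by
  set n := Fintype.card α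
  set k := ⌊logb 2 n - 2 * logb 2 (logb 2 (2 * n))⌋
  rcases le_or_gt k 4 with hk | hk
  · exact ⟨fun _ _ => false, fun _ D _ => by omega⟩
  obtain ⟨d, hd⟩ : ∃ d : ℕ, k = ((d + 5 : ℕ) : ℤ) := ⟨(k - 5).toNat, by omega⟩
  have hnR : (1 : ℝ) ≤ n := by exact_mod_cast hα
  have hsize : 2 ^ (d + 5) * logb 2 (2 * n) ^ 2 ≤ (n : ℝ) := by
    have hL : 0 < logb 2 (2 * (n : ℝ)) := logb_pos one_lt_two (by linarith)
    have : (2 : ℝ) ^ k * logb 2 (2 * n) ^ 2 ≤ n := two_zpow_floor_mul_sq_le (by linarith) hL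
    rwa [hd, zpow_natCast] at this
  obtain ⟨hdn, hlog⟩ := log_mul_lt_div_two_pow hα hsize
  obtain ⟨o, ho⟩ := exists_xorTournament_forall_exists_agreeing_row d hdn
    (mul_choose_mul_pow_lt hdn hlog)
  refine ⟨o, fun x D hD => ?_⟩
  have := (isReflTournament_xorTournament o).lt_card_of_isTeachingSet (by omega) (ho x) hD
  omega

/-- For all sufficiently large `n` there is a concept class `𝒞`
of size `n` over `Fin n` with `NCTD(𝒞) = 1` and
`TD_min(𝒞) ≥ ⌊log₂ n − 2 log₂ log₂ (2n)⌋ − 4`. -/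
theorem stmt8 :
    ∃ N : ℕ, ∀ n : ℕ, N ≤ n →
      ∃ 𝒞 : Finset (Finset (Fin n)),
        𝒞.card = n ∧
        -- NCTD(𝒞) = 1 : there is a no-clash teacher of order 1 ...
        (∃ T : Finset (Fin n) → Finset (Fin n),
          (∀ C ∈ 𝒞, (T C).card ≤ 1) ∧
          (∀ C ∈ 𝒞, ∀ C' ∈ 𝒞, C ≠ C' →
            ∃ x ∈ T C ∪ T C', (x ∈ C ↔ x ∉ C'))) ∧
        -- ... and none of order 0
        (¬ ∃ T : Finset (Fin n) → Finset (Fin n),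
          (∀ C ∈ 𝒞, (T C).card = 0) ∧
          (∀ C ∈ 𝒞, ∀ C' ∈ 𝒞, C ≠ C' →
            ∃ x ∈ T C ∪ T C', (x ∈ C ↔ x ∉ C'))) ∧
        -- TD_min(𝒞) ≥ ⌊log₂ n − 2·log₂ log₂ (2n)⌋ − 4 :
        -- every teaching set of every concept is at least that large
        (∀ C ∈ 𝒞, ∀ D : Finset (Fin n),
          (∀ C' ∈ 𝒞, C' ≠ C → ∃ x ∈ D, (x ∈ C ↔ x ∉ C')) →
          (⌊Real.logb 2 n - 2 * Real.logb 2 (Real.logb 2 (2 * n))⌋ - 4 : ℤ)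
            ≤ (D.card : ℤ)) := by
  refine ⟨2, fun n hn => ?_⟩
  obtain ⟨o, ho⟩ := exists_xorTournament_le_card_of_isTeachingSet (α := Fin n) (by simp; omega)
  have hr := isReflTournament_xorTournament o
  have hcard : #(univ.image (rowSet (xorTournament o))) = n := by
    rw [card_image_of_injective _ hr.rowSet_injective, card_univ, Fintype.card_fin]
  refine ⟨_, hcard, ⟨_, fun C _ => hr.card_filter_rowSet_eq_le_one C, hr.isNoClashTeacher⟩,
    fun ⟨T, hT, hclash⟩ => ?_, fun C hC D hD => ?_⟩
  · exact not_isNoClashTeacher_of_forall_eq_empty (by omega)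
      (fun C hC => card_eq_zero.1 (hT C hC)) hclash
  · obtain ⟨x, -, rfl⟩ := mem_image.1 hC
    simpa using ho x D hD
end

section
/- Let H_t(n,k) be the maximum size of a family ℱ of k-subsets of [n] such that ℱ does not contain t+1 distinct sets whose union has size k+1 (no narrow (t+1)-clique in the induced subgraph of J(n,k)). Then for 1 ≤ t ≤ k ≤ n−2, H_t(n,k)/C(n,k) ≤ H_t(n−1,k)/C(n−1,k). -/
open Finset

lemma map_sup_id' {α β : Type*} [DecidableEq α] [DecidableEq β] (f : α ↪ β)
    (𝒦 : Finset (Finset α)) :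
    (𝒦.image (fun K => K.map f)).sup id = (𝒦.sup id).map f := by
  ext x
  simp only [Finset.mem_sup, Finset.mem_image, id, Finset.mem_map]
  constructor
  · rintro ⟨V, ⟨K, hK, rfl⟩, hx⟩
    rcases Finset.mem_map.1 hx with ⟨y, hy, rfl⟩
    exact ⟨y, ⟨K, hK, hy⟩, rfl⟩
  · rintro ⟨y, ⟨K, hK, hy⟩, rfl⟩
    exact ⟨K.map f, ⟨K, hK, rfl⟩, Finset.mem_map_of_mem f hy⟩

/-- With `H_t(n,k)` the maximum size of a family of `k`-subsets
of `[n]` containing no `t+1` distinct sets whose union has size `k+1`, for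
`1 ≤ t ≤ k ≤ n−2` the normalized quantity `H_t(n,k)/C(n,k)` is monotone:
`H_t(n,k)/C(n,k) ≤ H_t(n−1,k)/C(n−1,k)`, stated by cross-multiplication. -/
theorem stmt15 (n k t : ℕ) (ht : 1 ≤ t) (htk : t ≤ k) (hkn : k + 2 ≤ n)
    (H H' : ℕ)
    (hH : IsGreatest {m : ℕ | ∃ ℱ : Finset (Finset (Fin n)),
      (∀ F ∈ ℱ, F.card = k) ∧
      (∀ 𝒦 : Finset (Finset (Fin n)), 𝒦 ⊆ ℱ → 𝒦.card = t + 1 →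
        (𝒦.sup id).card ≠ k + 1) ∧
      ℱ.card = m} H)
    (hH' : IsGreatest {m : ℕ | ∃ ℱ : Finset (Finset (Fin (n - 1))),
      (∀ F ∈ ℱ, F.card = k) ∧
      (∀ 𝒦 : Finset (Finset (Fin (n - 1))), 𝒦 ⊆ ℱ → 𝒦.card = t + 1 →
        (𝒦.sup id).card ≠ k + 1) ∧
      ℱ.card = m} H') :
    H * (n - 1).choose k ≤ H' * n.choose k := by
  
  obtain ⟨m, rfl⟩ : ∃ m, n = m + 1 := ⟨n - 1, by omega⟩
  simp only [Nat.add_sub_cancel] at hH' ⊢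
  obtain ⟨⟨ℱ, hcard, hclique, hFH⟩, -⟩ := hH
  -- counting
  have hsum : ∑ i : Fin (m+1), (ℱ.filter (fun F => i ∈ F)).card = k * H := by
    have : ∀ i : Fin (m+1), (ℱ.filter (fun F => i ∈ F)).card
        = ∑ F ∈ ℱ, if i ∈ F then 1 else 0 := fun i => Finset.card_filter _ _
    rw [Finset.sum_congr rfl (fun i _ => this i), Finset.sum_comm]
    have : ∀ F ∈ ℱ, (∑ i : Fin (m+1), if i ∈ F then 1 else 0) = k := by
      intro F hF
      rw [← Finset.card_filter, Finset.filter_univ_mem, hcard F hF]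
    rw [Finset.sum_congr rfl this, Finset.sum_const, smul_eq_mul, hFH, mul_comm]
  obtain ⟨i, -, hi⟩ : ∃ i ∈ (Finset.univ : Finset (Fin (m+1))),
      (m+1) * (ℱ.filter (fun F => i ∈ F)).card ≤ k * H := by
    apply Finset.exists_le_of_sum_le Finset.univ_nonempty
    rw [← Finset.mul_sum, hsum, Finset.sum_const, Finset.card_univ,
      Fintype.card_fin, smul_eq_mul, mul_comm]
  set e : Fin m ↪ Fin (m+1) := ⟨i.succAbove, Fin.succAbove_right_injective⟩ with he
  set ℱ' := ℱ.filter (fun F => i ∉ F) with hℱ'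
  set d : Finset (Fin (m+1)) → Finset (Fin m) :=
    fun F => F.preimage i.succAbove Fin.succAbove_right_injective.injOn with hd
  have up_down : ∀ F : Finset (Fin (m+1)), i ∉ F → (d F).map e = F := by
    intro F hiF
    ext x
    simp only [hd, Finset.mem_map, Finset.mem_preimage, he, Function.Embedding.coeFn_mk]
    constructor
    · rintro ⟨y, hy, rfl⟩; exact hy
    · intro hx
      obtain ⟨y, rfl⟩ := Fin.exists_succAbove_eq
        (show x ≠ i from fun h => hiF (h ▸ hx))
      exact ⟨y, hx, rfl⟩
  have up_down' : ∀ F ∈ ℱ', (d F).map e = F := by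
    intro F hF
    exact up_down F (Finset.mem_filter.1 hF).2
  set 𝒢 := ℱ'.image d with h𝒢
  have hinj : Set.InjOn d ℱ' := by
    intro F1 h1 F2 h2 h
    rw [← up_down' F1 h1, ← up_down' F2 h2, h]
  have hcard𝒢 : 𝒢.card = ℱ'.card := Finset.card_image_of_injOn hinj
  have hGmem : 𝒢.card ≤ H' := by
    apply hH'.2
    refine ⟨𝒢, ?_, ?_, rfl⟩
    · intro G hG
      obtain ⟨F, hF, rfl⟩ := Finset.mem_image.1 hG
      have := congrArg Finset.card (up_down' F hF)
      rw [Finset.card_map] at this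
      rw [this, hcard F (Finset.mem_of_mem_filter F hF)]
    · intro 𝒦 h𝒦 h𝒦card
      have hup : 𝒦.image (fun K => K.map e) ⊆ ℱ := by
        intro V hV
        obtain ⟨K, hK, rfl⟩ := Finset.mem_image.1 hV
        obtain ⟨F, hF, rfl⟩ := Finset.mem_image.1 (h𝒦 hK)
        rw [up_down' F hF]
        exact Finset.mem_of_mem_filter F hF
      have hupcard : (𝒦.image (fun K => K.map e)).card = t + 1 := by
        rw [Finset.card_image_of_injective 𝒦 (Finset.map_injective e), h𝒦card]
      have := hclique _ hup hupcard
      rw [map_sup_id', Finset.card_map] at this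
      exact this
  -- arithmetic
  have hsplit : (ℱ.filter (fun F => i ∈ F)).card + ℱ'.card = H := by
    rw [hℱ', ← hFH]
    exact Finset.card_filter_add_card_filter_not _
  have key : (m + 1 - k) * H ≤ (m + 1) * H' := by
    have h1 : (m+1) * H ≤ k * H + (m+1) * H' := by
      calc (m+1) * H = (m+1) * (ℱ.filter (fun F => i ∈ F)).card + (m+1) * ℱ'.card := by
            rw [← Nat.mul_add, hsplit]
        _ ≤ k * H + (m+1) * H' := by
            have : ℱ'.card ≤ H' := hcard𝒢 ▸ hGmem
            exact Nat.add_le_add hi (Nat.mul_le_mul_left _ this)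
    have h2 : (m+1-k) * H + k * H = (m+1) * H := by
      rw [← Nat.add_mul]; congr 1; omega
    omega
  have hc := Nat.choose_mul_succ_eq m k
  refine Nat.le_of_mul_le_mul_right ?_ (show 0 < m + 1 by omega)
  calc H * m.choose k * (m+1) = H * (m.choose k * (m+1)) := by ring
    _ = ((m+1-k) * H) * (m+1).choose k := by rw [hc]; ring
    _ ≤ ((m+1) * H') * (m+1).choose k := Nat.mul_le_mul_right _ key
    _ = H' * (m+1).choose k * (m+1) := by ring
end

section
/- Let 𝒞 be a concept class over [n] with a no-clash teacher T of order d with all teaching sets of size d, let m(F) = |{C ∈ 𝒞 : T(C) = F}| and ℱ_t = {F : m(F) > 2^{d+1}/(t+1)} for 2 ≤ t ≤ d. Then ℱ_t contains no t+1 distinct sets whose union has size d+1 (no narrow (t+1)-clique in J(n,d)). -/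
/-- For a no-clash teacher `T` with all teaching sets of size
`d`, letting `m(F)` be the number of concepts taught by `F`, the family
`ℱ_t = {F : m(F) > 2^{d+1}/(t+1)}` (for `2 ≤ t ≤ d`) contains no `t+1`
distinct sets whose union has size `d+1` (no narrow `(t+1)`-clique). -/
theorem stmt17 (n d t : ℕ) (ht : 2 ≤ t) (htd : t ≤ d)
    (𝒞 : Finset (Finset (Fin n))) (T : Finset (Fin n) → Finset (Fin n))
    (horder : ∀ C ∈ 𝒞, (T C).card = d)
    (hnc : ∀ C ∈ 𝒞, ∀ C' ∈ 𝒞, C ≠ C' →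
      ∃ x ∈ T C ∪ T C', (x ∈ C ↔ x ∉ C')) :
    ∀ 𝒦 : Finset (Finset (Fin n)), 𝒦.card = t + 1 →
      (∀ F ∈ 𝒦, 2 ^ (d + 1) < (t + 1) * (𝒞.filter fun C => T C = F).card) →
      (𝒦.sup id).card ≠ d + 1 := by
  intro 𝒦 hcard hbig hD
  set D := 𝒦.sup id with hDdef
  -- the set of concepts taught by some F ∈ 𝒦
  set S : Finset (Finset (Fin n)) :=
    𝒦.biUnion (fun F => 𝒞.filter fun C => T C = F) with hS
  have hKne : 𝒦.Nonempty := by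
    rw [← Finset.card_pos, hcard]; omega
  have hdisj : ∀ F ∈ 𝒦, ∀ F' ∈ 𝒦, F ≠ F' →
      Disjoint (𝒞.filter fun C => T C = F) (𝒞.filter fun C => T C = F') := by
    intro F _ F' _ hne
    rw [Finset.disjoint_left]
    intro C hC hC'
    simp only [Finset.mem_filter] at hC hC'
    exact hne (hC.2 ▸ hC'.2 ▸ rfl)
  have hScard : S.card = ∑ F ∈ 𝒦, (𝒞.filter fun C => T C = F).card :=
    Finset.card_biUnion hdisj
  have hsum : 2 ^ (d + 1) < S.card := by
    have h1 : (t + 1) * 2 ^ (d + 1) < (t + 1) * S.card := by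
      rw [hScard, Finset.mul_sum]
      calc (t + 1) * 2 ^ (d + 1) = ∑ _F ∈ 𝒦, 2 ^ (d + 1) := by
            rw [Finset.sum_const, hcard, smul_eq_mul]
        _ < ∑ F ∈ 𝒦, (t + 1) * (𝒞.filter fun C => T C = F).card :=
            Finset.sum_lt_sum_of_nonempty hKne hbig
    exact Nat.lt_of_mul_lt_mul_left h1
  -- pigeonhole on intersections with D
  have hmaps : ∀ C ∈ S, C ∩ D ∈ D.powerset := by
    intro C _; simp [Finset.inter_subset_right]
  have hps : D.powerset.card < S.card := by
    rw [Finset.card_powerset, hD]; exact hsum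
  obtain ⟨C, hC, C', hC', hne, heq⟩ :=
    Finset.exists_ne_map_eq_of_card_lt_of_maps_to hps hmaps
  have hCS : ∀ B ∈ S, B ∈ 𝒞 ∧ T B ⊆ D := by
    intro B hB
    simp only [hS, Finset.mem_biUnion, Finset.mem_filter] at hB
    obtain ⟨F, hF, hB𝒞, hTB⟩ := hB
    exact ⟨hB𝒞, hTB ▸ Finset.le_sup (f := id) hF⟩
  obtain ⟨hC𝒞, hTC⟩ := hCS C hC
  obtain ⟨hC'𝒞, hTC'⟩ := hCS C' hC'
  obtain ⟨x, hx, hiff⟩ := hnc C hC𝒞 C' hC'𝒞 hne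
  have hxD : x ∈ D := by
    rcases Finset.mem_union.mp hx with h | h
    · exact hTC h
    · exact hTC' h
  have : x ∈ C ↔ x ∈ C' := by
    constructor
    · intro h
      have : x ∈ C' ∩ D := heq ▸ Finset.mem_inter.mpr ⟨h, hxD⟩
      exact (Finset.mem_inter.mp this).1
    · intro h
      have : x ∈ C ∩ D := heq ▸ Finset.mem_inter.mpr ⟨h, hxD⟩
      exact (Finset.mem_inter.mp this).1
  tauto
end

section
/- Any concept class over a domain of size n ≥ 2 that admits a no-clash teacher of order 2 contains at most (5n−4)·n/3 concepts. -/
/-- For `n ≥ 2`, any concept class over a domain of size `n`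
admitting a no-clash teacher of order 2 has at most `(5n−4)·n/3` concepts,
stated by cross-multiplication. -/
theorem stmt19 {X : Type*} [Fintype X] [DecidableEq X] (n : ℕ)
    (hn : Fintype.card X = n) (hn2 : 2 ≤ n)
    (𝒞 : Finset (Finset X)) (T : Finset X → Finset X)
    (horder : ∀ C ∈ 𝒞, (T C).card ≤ 2)
    (hnc : ∀ C ∈ 𝒞, ∀ C' ∈ 𝒞, C ≠ C' →
      ∃ x ∈ T C ∪ T C', (x ∈ C ↔ x ∉ C')) :
    3 * 𝒞.card ≤ (5 * n - 4) * n := by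
  rcases lt_or_ge n 3 with h3 | h3
  · -- case n = 2 : trivial cardinality bound 𝒞.card ≤ 2^2 = 4
    interval_cases n
    have h4 : 𝒞.card ≤ 4 := by
      have := Finset.card_le_univ 𝒞
      rw [Fintype.card_finset, hn] at this
      norm_num at this
      exact this
    omega
  -- main case n ≥ 3
  classical
  set triples := (Finset.univ : Finset X).powersetCard 3 with htriples
  -- Key: at most 8 concepts have their teaching set inside a fixed 3-set Y
  have key : ∀ Y ∈ triples, (𝒞.filter (fun C => T C ⊆ Y)).card ≤ 8 := by
    intro Y hY
    have hYcard : Y.card = 3 := (Finset.mem_powersetCard.mp hY).2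
    have hinj : (𝒞.filter (fun C => T C ⊆ Y)).card ≤ Y.powerset.card := by
      apply Finset.card_le_card_of_injOn (fun C => C ∩ Y)
      · intro C _
        simp [Finset.mem_powerset]
      · intro C hC C' hC' hEq
        by_contra hne
        simp only [Finset.coe_filter, Set.mem_setOf_eq] at hC hC'
        obtain ⟨x, hx, hiff⟩ := hnc C hC.1 C' hC'.1 hne
        have hxY : x ∈ Y := by
          rcases Finset.mem_union.mp hx with h | h
          · exact hC.2 h
          · exact hC'.2 h
        have hEq' : C ∩ Y = C' ∩ Y := hEq
        have hx1 : x ∈ C ∩ Y ↔ x ∈ C' ∩ Y := by rw [hEq']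
        simp only [Finset.mem_inter, hxY, and_true] at hx1
        tauto
    rwa [Finset.card_powerset, hYcard] at hinj
  -- each concept's teaching set lies in at least n - 2 triples
  have lower : ∀ C ∈ 𝒞, n - 2 ≤ (triples.filter (fun Y => T C ⊆ Y)).card := by
    intro C hC
    obtain ⟨S, hTS, hSu, hScard⟩ :=
      Finset.exists_subsuperset_card_eq (Finset.subset_univ (T C)) (horder C hC)
        (by rw [Finset.card_univ, hn]; exact hn2)
    have hmap : ∀ z ∈ Finset.univ \ S, insert z S ∈ triples.filter (fun Y => T C ⊆ Y) := by
      intro z hz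
      have hzS : z ∉ S := (Finset.mem_sdiff.mp hz).2
      refine Finset.mem_filter.mpr ⟨Finset.mem_powersetCard.mpr ⟨Finset.subset_univ _, ?_⟩, ?_⟩
      · rw [Finset.card_insert_of_notMem hzS, hScard]
      · exact hTS.trans (Finset.subset_insert _ _)
    have hinj : (Finset.univ \ S).card ≤ (triples.filter (fun Y => T C ⊆ Y)).card := by
      apply Finset.card_le_card_of_injOn (fun z => insert z S) hmap
      intro z hz z' hz' hEq
      have hzS : z ∉ S := (Finset.mem_sdiff.mp hz).2
      have hz'S : z' ∉ S := (Finset.mem_sdiff.mp hz').2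
      have hEq' : insert z S = insert z' S := hEq
      have : z ∈ insert z' S := hEq' ▸ Finset.mem_insert_self z S
      rcases Finset.mem_insert.mp this with h | h
      · exact h
      · exact absurd h hzS
    have hcard : (Finset.univ \ S).card = n - 2 := by
      rw [Finset.card_sdiff_of_subset (Finset.subset_univ S), Finset.card_univ, hn, hScard]
    omega
  -- double counting
  have count : (n - 2) * 𝒞.card ≤ 8 * triples.card := by
    calc (n - 2) * 𝒞.card = ∑ _C ∈ 𝒞, (n - 2) := by
          rw [Finset.sum_const, smul_eq_mul, Nat.mul_comm]
      _ ≤ ∑ C ∈ 𝒞, (triples.filter (fun Y => T C ⊆ Y)).card :=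
          Finset.sum_le_sum lower
      _ = ∑ C ∈ 𝒞, ∑ Y ∈ triples, (if T C ⊆ Y then 1 else 0) := by
          simp only [Finset.card_filter]
      _ = ∑ Y ∈ triples, ∑ C ∈ 𝒞, (if T C ⊆ Y then 1 else 0) := Finset.sum_comm
      _ = ∑ Y ∈ triples, (𝒞.filter (fun C => T C ⊆ Y)).card := by
          simp only [Finset.card_filter]
      _ ≤ ∑ _Y ∈ triples, 8 := Finset.sum_le_sum key
      _ = 8 * triples.card := by rw [Finset.sum_const, smul_eq_mul, Nat.mul_comm]
  have htc : 6 * triples.card = (n - 2) * ((n - 1) * n) := by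
    have h1 : triples.card = n.choose 3 := by
      rw [htriples, Finset.card_powersetCard, Finset.card_univ, hn]
    have h2 : n.descFactorial 3 = 6 * n.choose 3 := by
      rw [Nat.descFactorial_eq_factorial_mul_choose]; norm_num [Nat.factorial]
    have h3 : n.descFactorial 3 = (n - 2) * ((n - 1) * n) := by
      simp [Nat.descFactorial_succ]
    omega
  -- conclude: (n-2) * (3 * 𝒞.card) ≤ (n-2) * ((5n-4) * n)
  have hfin : (n - 2) * (3 * 𝒞.card) ≤ (n - 2) * ((5 * n - 4) * n) := by
    calc (n - 2) * (3 * 𝒞.card) ≤ 3 * (8 * triples.card) := by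
          rw [show (n-2) * (3 * 𝒞.card) = 3 * ((n-2) * 𝒞.card) by ring]
          exact Nat.mul_le_mul_left 3 count
      _ = 4 * (6 * triples.card) := by ring
      _ = (n - 2) * (4 * ((n - 1) * n)) := by rw [htc]; ring
      _ ≤ (n - 2) * ((5 * n - 4) * n) := by
          apply Nat.mul_le_mul_left
          have h4 : 4 * (n - 1) ≤ 5 * n - 4 := by omega
          calc 4 * ((n - 1) * n) = (4 * (n - 1)) * n := by ring
            _ ≤ (5 * n - 4) * n := Nat.mul_le_mul_right n h4
  have hpos : 0 < n - 2 := by omega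
  exact Nat.le_of_mul_le_mul_left hfin hpos
end
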